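/- Let Σ = {0,1,2} with the standard metric d(a,b)=|a−b|, let α, k be positive integers, and define Z(1) = 0^α 1^α 2^α and Z(0) = 0^α 1 2^α. For a binary string x of length k, let A(x) = Z(x₁)∘⋯∘Z(x_k), and for i ∈ [k] let B(i) = (012)^{i−1} ∘ (02) ∘ (012)^{k−i}. If x_i = 0, then dtw(A(x), B(i)) ≤ 1. -/

import Mathlib

/-- `xb` is an expansion of `x`: each letter of `x` is duplicated in place a positive
number of times. -/
def IsExpansion {α : Type*} (x xb : List α) : Prop :=
  ∃ ks : List ℕ, ks.length = x.length ∧ (∀ k ∈ ks, 0 < k) ∧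
    xb = (List.zipWith (fun a k => List.replicate k a) x ks).flatten

/-- `(xb, yb)` is a correspondence between `x` and `y`: a pair of equal-length expansions. -/
def IsCorrespondence {α : Type*} (x y xb yb : List α) : Prop :=
  IsExpansion x xb ∧ IsExpansion y yb ∧ xb.length = yb.length

/-- The cost of a correspondence: summed distances of aligned letters. -/
noncomputable def corrCost {α : Type*} (δ : α → α → ℝ) (xb yb : List α) : ℝ :=
  (List.zipWith δ xb yb).sum

/-- Dynamic time warping distance with respect to a distance function `δ`. -/
noncomputable def dtw {α : Type*} (δ : α → α → ℝ) (x y : List α) : ℝ :=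
  sInf {c | ∃ xb yb, IsCorrespondence x y xb yb ∧ c = corrCost δ xb yb}

/-- Generalized Hamming distance on letters. -/
noncomputable def hamDist {α : Type*} [DecidableEq α] (a b : α) : ℝ := if a = b then 0 else 1

/-- DTW over generalized Hamming space. -/
noncomputable def dtw0 {α : Type*} [DecidableEq α] (x y : List α) : ℝ := dtw hamDist x y

/-- Alice's gadget: Z(1) = 0^α 1^α 2^α and Z(0) = 0^α 1 2^α. -/
def Zgadget (a : ℕ) : Bool → List ℤ
  | true => List.replicate a 0 ++ List.replicate a 1 ++ List.replicate a 2
  | false => List.replicate a 0 ++ [1] ++ List.replicate a 2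

/-- Alice's string A(x) = Z(x₁) ∘ ⋯ ∘ Z(x_k). -/
def Astr (a k : ℕ) (x : Fin k → Bool) : List ℤ :=
  (List.ofFn fun j => Zgadget a (x j)).flatten

/-- Bob's string B(i) = (012)^{i-1} ∘ (02) ∘ (012)^{k-i} (i zero-indexed here). -/
def Bstr (k : ℕ) (i : Fin k) : List ℤ :=
  (List.replicate (i : ℕ) ([0, 1, 2] : List ℤ)).flatten ++ [0, 2] ++
    (List.replicate (k - 1 - (i : ℕ)) ([0, 1, 2] : List ℤ)).flatten

/-!
Align each gadget `Z(x_j)` with the block of `B(i)` below it. For `j ≠ i` the block is `012`,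
and `Z(x_j)` is an expansion of it, which costs nothing. For `j = i` the block is `02`, and
`Z(0) = 0^α 1 2^α` is aligned with the expansion `0^α 2^(α+1)` of `02`, so the only mismatch
is the single `1` placed against a `2`, which costs `|1 - 2| = 1`.
-/

section Correspondence

variable {α : Type*}

theorem IsExpansion.refl (x : List α) : IsExpansion x x := by
  refine ⟨List.replicate x.length 1, by simp, by simp, ?_⟩
  induction x with
  | nil => rfl
  | cons a t ih => simpa [List.replicate_succ] using ih

theorem IsExpansion.append {x y xb yb : List α} (hx : IsExpansion x xb)
    (hy : IsExpansion y yb) : IsExpansion (x ++ y) (xb ++ yb) := by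
  obtain ⟨ks, hks, hks_pos, rfl⟩ := hx
  obtain ⟨ls, hls, hls_pos, rfl⟩ := hy
  refine ⟨ks ++ ls, by simp [hks, hls], ?_, ?_⟩
  · simpa only [List.mem_append, or_imp, forall_and] using ⟨hks_pos, hls_pos⟩
  · rw [List.zipWith_append hks.symm, List.flatten_append]

theorem IsCorrespondence.append {x y xb yb x' y' xb' yb' : List α}
    (h : IsCorrespondence x y xb yb) (h' : IsCorrespondence x' y' xb' yb') :
    IsCorrespondence (x ++ x') (y ++ y') (xb ++ xb') (yb ++ yb') :=
  ⟨h.1.append h'.1, h.2.1.append h'.2.1, by simp [h.2.2, h'.2.2]⟩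

variable (δ : α → α → ℝ)

theorem corrCost_cons (a b : α) (xb yb : List α) :
    corrCost δ (a :: xb) (b :: yb) = δ a b + corrCost δ xb yb := by
  simp [corrCost]

theorem corrCost_append {xb yb : List α} (xb' yb' : List α) (h : xb.length = yb.length) :
    corrCost δ (xb ++ xb') (yb ++ yb') = corrCost δ xb yb + corrCost δ xb' yb' := by
  simp [corrCost, List.zipWith_append h]

variable {δ}

theorem corrCost_nonneg (hδ : ∀ a b, 0 ≤ δ a b) (xb yb : List α) :
    0 ≤ corrCost δ xb yb := by
  induction xb generalizing yb with
  | nil => exact le_rfl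
  | cons a t ih =>
    cases yb with
    | nil => exact le_rfl
    | cons b s =>
      rw [corrCost_cons]
      exact add_nonneg (hδ a b) (ih s)

theorem corrCost_self (hδ : ∀ a, δ a a = 0) (xb : List α) : corrCost δ xb xb = 0 := by
  induction xb with
  | nil => rfl
  | cons a t ih => rw [corrCost_cons, ih, hδ, add_zero]

theorem corrCost_append_singleton_append (hδ : ∀ a, δ a a = 0) (u v : List α) (p q : α) :
    corrCost δ (u ++ p :: v) (u ++ q :: v) = δ p q := by
  rw [corrCost_append δ _ _ rfl, corrCost_cons, corrCost_self hδ, corrCost_self hδ]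
  ring

variable (δ)

def HasCorrespondenceWithin (x y : List α) (c : ℝ) : Prop :=
  ∃ xb yb, IsCorrespondence x y xb yb ∧ corrCost δ xb yb ≤ c

variable {δ}

theorem HasCorrespondenceWithin.append {x y x' y' : List α} {c c' : ℝ}
    (h : HasCorrespondenceWithin δ x y c) (h' : HasCorrespondenceWithin δ x' y' c') :
    HasCorrespondenceWithin δ (x ++ x') (y ++ y') (c + c') := by
  obtain ⟨xb, yb, hxy, hc⟩ := h
  obtain ⟨xb', yb', hxy', hc'⟩ := h'
  refine ⟨xb ++ xb', yb ++ yb', hxy.append hxy', ?_⟩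
  rw [corrCost_append δ _ _ hxy.2.2]
  exact add_le_add hc hc'

theorem hasCorrespondenceWithin_zero_of_isExpansion (hδ : ∀ a, δ a a = 0) {x y : List α}
    (h : IsExpansion y x) : HasCorrespondenceWithin δ x y 0 :=
  ⟨x, x, ⟨IsExpansion.refl x, h, rfl⟩, (corrCost_self hδ x).le⟩

theorem dtw_le_of_hasCorrespondenceWithin (hδ : ∀ a b, 0 ≤ δ a b) {x y : List α} {c : ℝ}
    (h : HasCorrespondenceWithin δ x y c) : dtw δ x y ≤ c := by
  obtain ⟨xb, yb, hxy, hc⟩ := h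
  refine le_trans (csInf_le ?_ ⟨xb, yb, hxy, rfl⟩) hc
  refine ⟨0, ?_⟩
  rintro _ ⟨_, _, _, rfl⟩
  exact corrCost_nonneg hδ _ _

end Correspondence

section Gadgets

variable {a : ℕ}

theorem isExpansion_zgadget (ha : 0 < a) (b : Bool) : IsExpansion [0, 1, 2] (Zgadget a b) := by
  refine ⟨[a, if b then a else 1, a], rfl, ?_, ?_⟩
  · cases b <;> simp [ha]
  · cases b <;> simp [Zgadget]

theorem isExpansion_astr (ha : 0 < a) {k : ℕ} (x : Fin k → Bool) :
    IsExpansion (List.replicate k [0, 1, 2]).flatten (Astr a k x) := by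
  induction k with
  | zero => exact IsExpansion.refl []
  | succ k ih =>
    simpa [Astr, List.ofFn_succ, List.replicate_succ] using
      (isExpansion_zgadget ha (x 0)).append (ih fun j => x j.succ)

theorem hasCorrespondenceWithin_zgadget_false (ha : 0 < a) :
    HasCorrespondenceWithin dist (Zgadget a false) [0, 2] 1 := by
  have hexp : IsExpansion [0, 2] (List.replicate a 0 ++ 2 :: List.replicate a (2 : ℤ)) :=
    ⟨[a, a + 1], rfl, by simp [ha], by simp [List.replicate_succ]⟩
  refine ⟨_, _, ⟨IsExpansion.refl _, hexp, by simp [Zgadget]⟩, ?_⟩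
  rw [show Zgadget a false = List.replicate a 0 ++ 1 :: List.replicate a 2 by simp [Zgadget],
    corrCost_append_singleton_append dist_self]
  norm_num [Int.dist_eq]

theorem astr_succ {k : ℕ} (x : Fin (k + 1) → Bool) :
    Astr a (k + 1) x = Zgadget a (x 0) ++ Astr a k (fun j => x j.succ) := by
  simp [Astr, List.ofFn_succ]

theorem bstr_zero (k : ℕ) :
    Bstr (k + 1) 0 = [0, 2] ++ (List.replicate k ([0, 1, 2] : List ℤ)).flatten := by
  simp [Bstr]

theorem bstr_succ {k : ℕ} (i : Fin k) : Bstr (k + 1) i.succ = [0, 1, 2] ++ Bstr k i := by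
  simp only [Bstr, Fin.val_succ, show k + 1 - 1 - (i + 1 : ℕ) = k - 1 - i by omega,
    List.replicate_succ, List.flatten_cons, List.append_assoc]

theorem hasCorrespondenceWithin_astr_bstr (ha : 0 < a) {k : ℕ} (x : Fin k → Bool) (i : Fin k)
    (h : x i = false) : HasCorrespondenceWithin dist (Astr a k x) (Bstr k i) 1 := by
  induction k with
  | zero => exact i.elim0
  | succ k ih =>
    rw [astr_succ]
    rcases Fin.eq_zero_or_eq_succ i with rfl | ⟨j, rfl⟩
    · rw [bstr_zero, h, ← add_zero (1 : ℝ)]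
      exact (hasCorrespondenceWithin_zgadget_false ha).append
        (hasCorrespondenceWithin_zero_of_isExpansion dist_self (isExpansion_astr ha _))
    · rw [bstr_succ, ← zero_add (1 : ℝ)]
      exact (hasCorrespondenceWithin_zero_of_isExpansion dist_self
        (isExpansion_zgadget ha _)).append (ih _ j h)

end Gadgets

/-- If x_i = 0, then dtw(A(x), B(i)) ≤ 1. -/
theorem dtw_index_zero (a k : ℕ) (ha : 0 < a) (x : Fin k → Bool) (i : Fin k)
    (h : x i = false) :
    dtw dist (Astr a k x) (Bstr k i) ≤ 1 :=
  dtw_le_of_hasCorrespondenceWithin (fun _ _ => dist_nonneg)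
    (hasCorrespondenceWithin_astr_bstr ha x i h)
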